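/- arXiv:2106.14850 — 3 statements merged into one kernel-verified Lean document; each statement's English description precedes it below -/
import Mathlib

section
/- Let α ≥ 0. Let b, ω, ψ : ℝ × ℝ² → ℝ be smooth functions, each 1-periodic in both spatial coordinates, and let f, h : ℝ² → ℝ be smooth and 1-periodic in both coordinates. Assume that pointwise on ℝ × ℝ²: (i) ∂_t b + J(ψ, b) = 0; (ii) ∂_t ω + J(ψ, ω − b) = −(1/2) J(h, b); (iii) ω(t,x) = Δψ(t,x) − ψ(t,x) − α(Δ²ψ(t,x) − Δψ(t,x)) + f(x), i.e. ω = (Δ − 1)(1 − αΔ)ψ + f. Then the energy E^α(t) := −(1/2) ∫_{[0,1]²} [(ω(t,x) − f(x)) ψ(t,x) + h(x) b(t,x)] dx is constant in t, i.e. dE^α/dt = 0. -/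
open MeasureTheory

/-- First spatial partial derivative ∂ₓ of a function on ℝ². -/
noncomputable def pdx (f : ℝ × ℝ → ℝ) : ℝ × ℝ → ℝ := fun p => fderiv ℝ f p (1, 0)

/-- Second spatial partial derivative ∂_y of a function on ℝ². -/
noncomputable def pdy (f : ℝ × ℝ → ℝ) : ℝ × ℝ → ℝ := fun p => fderiv ℝ f p (0, 1)

/-- The Laplacian Δ = ∂ₓₓ + ∂_yy. -/
noncomputable def lap (f : ℝ × ℝ → ℝ) : ℝ × ℝ → ℝ := fun p => pdx (pdx f) p + pdy (pdy f) p

/-- The Jacobian J(a,c) = ∂ₓa ∂_y c − ∂_y a ∂ₓ c. -/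
noncomputable def Jac (a c : ℝ × ℝ → ℝ) : ℝ × ℝ → ℝ :=
  fun p => pdx a p * pdy c p - pdy a p * pdx c p

/-- The unit square [0,1]², representing the 2-torus. -/
def UnitSq : Set (ℝ × ℝ) := Set.Icc (0:ℝ) 1 ×ˢ Set.Icc (0:ℝ) 1

/-- 1-periodicity in each coordinate of a scalar function on ℝ². -/
def Per2 (f : ℝ × ℝ → ℝ) : Prop :=
  ∀ p : ℝ × ℝ, f (p.1 + 1, p.2) = f p ∧ f (p.1, p.2 + 1) = f p

/-- 1-periodicity in each spatial coordinate for a time-dependent scalar field. -/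
def PerS (F : ℝ × (ℝ × ℝ) → ℝ) : Prop :=
  ∀ (t : ℝ) (p : ℝ × ℝ), F (t, (p.1 + 1, p.2)) = F (t, p) ∧ F (t, (p.1, p.2 + 1)) = F (t, p)


section Dgen
variable {E : Type*} [NormedAddCommGroup E] [NormedSpace ℝ E]

noncomputable def DD (v : E) (F : E → ℝ) : E → ℝ := fun z => fderiv ℝ F z v

theorem DD_contDiff {F : E → ℝ} (hF : ContDiff ℝ (⊤ : ℕ∞) F) (v : E) :
    ContDiff ℝ (⊤ : ℕ∞) (DD v F) :=
  ((hF.fderiv_right (by simp)).clm_apply contDiff_const)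

theorem DD_comm {F : E → ℝ} (hF : ContDiff ℝ (⊤ : ℕ∞) F) (v w : E) :
    DD v (DD w F) = DD w (DD v F) := by
  funext z
  have hsymm : IsSymmSndFDerivAt ℝ F z := (hF.contDiffAt).isSymmSndFDerivAt (by norm_num; exact WithTop.coe_le_coe.mpr le_top)
  have hd : DifferentiableAt ℝ (fderiv ℝ F) z :=
    ((hF.fderiv_right (m := 1) (WithTop.coe_le_coe.mpr le_top)).differentiable one_ne_zero).differentiableAt
  have key : ∀ u : E, fderiv ℝ (DD u F) z = (fderiv ℝ (fderiv ℝ F) z).flip u := by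
    intro u
    exact ((ContinuousLinearMap.apply ℝ ℝ u).hasFDerivAt.comp z hd.hasFDerivAt).fderiv
  show fderiv ℝ (DD w F) z v = fderiv ℝ (DD v F) z w
  rw [key w, key v]
  simpa using hsymm v w

theorem DD_per {F : E → ℝ} (hF : ContDiff ℝ (⊤ : ℕ∞) F) {c : E} (hper : ∀ z, F (z + c) = F z)
    (v : E) : ∀ z, DD v F (z + c) = DD v F z := by
  intro z
  have hFc : F = fun z => F (z + c) := funext fun z => (hper z).symm
  have h1 : HasFDerivAt (fun z : E => z + c) (ContinuousLinearMap.id ℝ E) z :=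
    (hasFDerivAt_id z).add_const c
  have h2 : HasFDerivAt (fun z => F (z + c)) (fderiv ℝ F (z + c)) z := by
    simpa [Function.comp_def] using ((hF.differentiable (by simp) (z + c)).hasFDerivAt).comp z h1
  have : fderiv ℝ F z = fderiv ℝ F (z + c) := by
    conv_lhs => rw [hFc]
    exact h2.fderiv
  show fderiv ℝ F (z + c) v = fderiv ℝ F z v
  rw [this]

theorem DD_mul {a c : E → ℝ} (ha : ContDiff ℝ (⊤ : ℕ∞) a) (hc : ContDiff ℝ (⊤ : ℕ∞) c) (v : E) :
    DD v (fun z => a z * c z) = fun z => DD v a z * c z + a z * DD v c z := by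
  funext z
  have := fderiv_fun_mul (𝕜 := ℝ) (ha.differentiable (by simp) z) (hc.differentiable (by simp) z)
  show fderiv ℝ (fun z => a z * c z) z v = _
  rw [this]
  simp [DD]
  ring

theorem DD_add {a c : E → ℝ} (ha : ContDiff ℝ (⊤ : ℕ∞) a) (hc : ContDiff ℝ (⊤ : ℕ∞) c) (v : E) :
    DD v (fun z => a z + c z) = fun z => DD v a z + DD v c z := by
  funext z
  show fderiv ℝ (fun z => a z + c z) z v = _
  rw [fderiv_fun_add (ha.differentiable (by simp) z)
    (hc.differentiable (by simp) z)]
  simp [DD]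

theorem DD_sub {a c : E → ℝ} (ha : ContDiff ℝ (⊤ : ℕ∞) a) (hc : ContDiff ℝ (⊤ : ℕ∞) c) (v : E) :
    DD v (fun z => a z - c z) = fun z => DD v a z - DD v c z := by
  funext z
  show fderiv ℝ (fun z => a z - c z) z v = _
  rw [fderiv_fun_sub (ha.differentiable (by simp) z)
    (hc.differentiable (by simp) z)]
  simp [DD]

end Dgen


abbrev Wsp := ℝ × (ℝ × ℝ)
def et : Wsp := (1, (0, 0))
def ex : Wsp := (0, (1, 0))
def ey : Wsp := (0, (0, 1))

theorem pdx_eq_DD (g : ℝ × ℝ → ℝ) : pdx g = DD ((1:ℝ), (0:ℝ)) g := rfl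
theorem pdy_eq_DD (g : ℝ × ℝ → ℝ) : pdy g = DD ((0:ℝ), (1:ℝ)) g := rfl

theorem hasDerivAt_slice_x {g : ℝ × ℝ → ℝ} (hg : ContDiff ℝ (⊤ : ℕ∞) g) (x y : ℝ) :
    HasDerivAt (fun x => g (x, y)) (pdx g (x, y)) x := by
  have h1 : HasDerivAt (fun x : ℝ => (x, y)) ((1:ℝ), (0:ℝ)) x := by
    simpa using (hasDerivAt_id x).prodMk (hasDerivAt_const x y)
  exact (hg.differentiable (by simp) (x, y)).hasFDerivAt.comp_hasDerivAt x h1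

theorem hasDerivAt_slice_y {g : ℝ × ℝ → ℝ} (hg : ContDiff ℝ (⊤ : ℕ∞) g) (x y : ℝ) :
    HasDerivAt (fun y => g (x, y)) (pdy g (x, y)) y := by
  have h1 : HasDerivAt (fun y : ℝ => (x, y)) ((0:ℝ), (1:ℝ)) y := by
    simpa using (hasDerivAt_const y x).prodMk (hasDerivAt_id y)
  exact (hg.differentiable (by simp) (x, y)).hasFDerivAt.comp_hasDerivAt y h1

theorem slice_contDiff {F : Wsp → ℝ} (hF : ContDiff ℝ (⊤ : ℕ∞) F) (t : ℝ) :
    ContDiff ℝ (⊤ : ℕ∞) (fun q => F (t, q)) :=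
  hF.comp (contDiff_const.prodMk contDiff_id)

theorem slice_pdx {F : Wsp → ℝ} (hF : ContDiff ℝ (⊤ : ℕ∞) F) (t : ℝ) :
    pdx (fun q => F (t, q)) = fun p => DD ex F (t, p) := by
  funext p
  have h1 : HasFDerivAt (fun q : ℝ × ℝ => ((t:ℝ), q))
      (ContinuousLinearMap.inr ℝ ℝ (ℝ × ℝ)) p :=
    (hasFDerivAt_const t p).prodMk (hasFDerivAt_id p)
  have h2 := (hF.differentiable (by simp) (t, p)).hasFDerivAt.comp p h1
  have h3 : HasFDerivAt (fun q => F (t, q))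
      ((fderiv ℝ F (t, p)).comp (ContinuousLinearMap.inr ℝ ℝ (ℝ × ℝ))) p := h2
  show fderiv ℝ (fun q => F (t, q)) p (1, 0) = fderiv ℝ F (t, p) ex
  rw [h3.fderiv]
  rfl

theorem slice_pdy {F : Wsp → ℝ} (hF : ContDiff ℝ (⊤ : ℕ∞) F) (t : ℝ) :
    pdy (fun q => F (t, q)) = fun p => DD ey F (t, p) := by
  funext p
  have h1 : HasFDerivAt (fun q : ℝ × ℝ => ((t:ℝ), q))
      (ContinuousLinearMap.inr ℝ ℝ (ℝ × ℝ)) p :=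
    (hasFDerivAt_const t p).prodMk (hasFDerivAt_id p)
  have h2 := (hF.differentiable (by simp) (t, p)).hasFDerivAt.comp p h1
  have h3 : HasFDerivAt (fun q => F (t, q))
      ((fderiv ℝ F (t, p)).comp (ContinuousLinearMap.inr ℝ ℝ (ℝ × ℝ))) p := h2
  show fderiv ℝ (fun q => F (t, q)) p (0, 1) = fderiv ℝ F (t, p) ey
  rw [h3.fderiv]
  rfl

theorem hasDerivAt_time {F : Wsp → ℝ} (hF : ContDiff ℝ (⊤ : ℕ∞) F) (t : ℝ) (p : ℝ × ℝ) :
    HasDerivAt (fun s => F (s, p)) (DD et F (t, p)) t := by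
  have h1 : HasDerivAt (fun s : ℝ => (s, p)) et t := by
    exact (hasDerivAt_id t).prodMk (hasDerivAt_const t p)
  exact (hF.differentiable (by simp) (t, p)).hasFDerivAt.comp_hasDerivAt t h1


theorem pdx_continuous {g : ℝ × ℝ → ℝ} (hg : ContDiff ℝ (⊤ : ℕ∞) g) : Continuous (pdx g) :=
  (DD_contDiff hg ((1:ℝ), (0:ℝ))).continuous

theorem pdy_continuous {g : ℝ × ℝ → ℝ} (hg : ContDiff ℝ (⊤ : ℕ∞) g) : Continuous (pdy g) :=
  (DD_contDiff hg ((0:ℝ), (1:ℝ))).continuous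

theorem integrableOn_unitSq {g : ℝ × ℝ → ℝ} (hg : Continuous g) :
    IntegrableOn g UnitSq := by
  exact hg.continuousOn.integrableOn_compact (isCompact_Icc.prod isCompact_Icc)

theorem integral_pdx_zero {g : ℝ × ℝ → ℝ} (hg : ContDiff ℝ (⊤ : ℕ∞) g) (hper : Per2 g) :
    ∫ p in UnitSq, pdx g p = 0 := by
  have hint : IntegrableOn (pdx g) UnitSq := integrableOn_unitSq (pdx_continuous hg)
  rw [show (volume : Measure (ℝ × ℝ)) = (volume : Measure ℝ).prod volume from
      (MeasureTheory.Measure.volume_eq_prod ℝ ℝ)] at hint ⊢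
  unfold UnitSq at hint ⊢
  have hint' : Integrable (pdx g)
      ((volume.restrict (Set.Icc (0:ℝ) 1)).prod (volume.restrict (Set.Icc (0:ℝ) 1))) := by
    rw [MeasureTheory.Measure.prod_restrict]; exact hint
  rw [← MeasureTheory.Measure.prod_restrict]
  rw [MeasureTheory.integral_prod_symm _ hint']
  have inner : ∀ y : ℝ, ∫ x in Set.Icc (0:ℝ) 1, pdx g (x, y) = 0 := by
    intro y
    rw [MeasureTheory.integral_Icc_eq_integral_Ioc, ← intervalIntegral.integral_of_le zero_le_one]
    have hii : IntervalIntegrable (fun x => pdx g (x, y)) volume 0 1 :=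
      ((pdx_continuous hg).comp (continuous_id.prodMk continuous_const)).intervalIntegrable 0 1
    rw [intervalIntegral.integral_eq_sub_of_hasDerivAt
      (fun x _ => hasDerivAt_slice_x hg x y) hii]
    have := (hper (0, y)).1
    simp only [zero_add] at this
    rw [this]; ring
  simp only [inner, integral_zero]

theorem integral_pdy_zero {g : ℝ × ℝ → ℝ} (hg : ContDiff ℝ (⊤ : ℕ∞) g) (hper : Per2 g) :
    ∫ p in UnitSq, pdy g p = 0 := by
  have hint : IntegrableOn (pdy g) UnitSq := integrableOn_unitSq (pdy_continuous hg)
  rw [show (volume : Measure (ℝ × ℝ)) = (volume : Measure ℝ).prod volume from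
      (MeasureTheory.Measure.volume_eq_prod ℝ ℝ)] at hint ⊢
  unfold UnitSq at hint ⊢
  rw [MeasureTheory.setIntegral_prod _ hint]
  have inner : ∀ x : ℝ, ∫ y in Set.Icc (0:ℝ) 1, pdy g (x, y) = 0 := by
    intro x
    rw [MeasureTheory.integral_Icc_eq_integral_Ioc, ← intervalIntegral.integral_of_le zero_le_one]
    have hii : IntervalIntegrable (fun y => pdy g (x, y)) volume 0 1 :=
      ((pdy_continuous hg).comp (continuous_const.prodMk continuous_id)).intervalIntegrable 0 1
    rw [intervalIntegral.integral_eq_sub_of_hasDerivAt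
      (fun y _ => hasDerivAt_slice_y hg x y) hii]
    have := (hper (x, 0)).2
    simp only [zero_add] at this
    rw [this]; ring
  simp only [inner, integral_zero]



def Nice (g : ℝ × ℝ → ℝ) : Prop := ContDiff ℝ (⊤ : ℕ∞) g ∧ Per2 g

theorem unitSq_meas : MeasurableSet UnitSq := measurableSet_Icc.prod measurableSet_Icc

theorem per2_iff {f : ℝ × ℝ → ℝ} (hf : Per2 f) :
    (∀ p : ℝ × ℝ, f (p + ((1:ℝ), (0:ℝ))) = f p) ∧
    (∀ p : ℝ × ℝ, f (p + ((0:ℝ), (1:ℝ))) = f p) := by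
  constructor <;> intro p
  · have h : p + ((1:ℝ), (0:ℝ)) = (p.1 + 1, p.2) := by ext <;> simp
    rw [h]; exact (hf p).1
  · have h : p + ((0:ℝ), (1:ℝ)) = (p.1, p.2 + 1) := by ext <;> simp
    rw [h]; exact (hf p).2

theorem per2_of {f : ℝ × ℝ → ℝ}
    (h1 : ∀ p : ℝ × ℝ, f (p + ((1:ℝ), (0:ℝ))) = f p)
    (h2 : ∀ p : ℝ × ℝ, f (p + ((0:ℝ), (1:ℝ))) = f p) : Per2 f := by
  intro p
  constructor
  · have h : p + ((1:ℝ), (0:ℝ)) = (p.1 + 1, p.2) := by ext <;> simp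
    rw [← h]; exact h1 p
  · have h : p + ((0:ℝ), (1:ℝ)) = (p.1, p.2 + 1) := by ext <;> simp
    rw [← h]; exact h2 p

theorem Nice.pdx {g : ℝ × ℝ → ℝ} (hg : Nice g) : Nice (pdx g) := by
  rw [pdx_eq_DD]
  exact ⟨DD_contDiff hg.1 _,
    per2_of (DD_per hg.1 (per2_iff hg.2).1 _) (DD_per hg.1 (per2_iff hg.2).2 _)⟩

theorem Nice.pdy {g : ℝ × ℝ → ℝ} (hg : Nice g) : Nice (pdy g) := by
  rw [pdy_eq_DD]
  exact ⟨DD_contDiff hg.1 _,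
    per2_of (DD_per hg.1 (per2_iff hg.2).1 _) (DD_per hg.1 (per2_iff hg.2).2 _)⟩

theorem Nice.mul {a c : ℝ × ℝ → ℝ} (ha : Nice a) (hc : Nice c) :
    Nice (fun p => a p * c p) := by
  refine ⟨ha.1.mul hc.1, fun p => ?_⟩
  exact ⟨by simp only [(ha.2 p).1, (hc.2 p).1], by simp only [(ha.2 p).2, (hc.2 p).2]⟩

theorem Nice.add {a c : ℝ × ℝ → ℝ} (ha : Nice a) (hc : Nice c) :
    Nice (fun p => a p + c p) := by
  refine ⟨ha.1.add hc.1, fun p => ?_⟩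
  exact ⟨by simp only [(ha.2 p).1, (hc.2 p).1], by simp only [(ha.2 p).2, (hc.2 p).2]⟩

theorem Nice.sub {a c : ℝ × ℝ → ℝ} (ha : Nice a) (hc : Nice c) :
    Nice (fun p => a p - c p) := by
  refine ⟨ha.1.sub hc.1, fun p => ?_⟩
  exact ⟨by simp only [(ha.2 p).1, (hc.2 p).1], by simp only [(ha.2 p).2, (hc.2 p).2]⟩

theorem Nice.lap {g : ℝ × ℝ → ℝ} (hg : Nice g) : Nice (_root_.lap g) := by
  have h : _root_.lap g = fun p => _root_.pdx (_root_.pdx g) p + _root_.pdy (_root_.pdy g) p := rfl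
  rw [h]
  exact (hg.pdx.pdx).add (hg.pdy.pdy)

theorem Nice.jac {a c : ℝ × ℝ → ℝ} (ha : Nice a) (hc : Nice c) : Nice (Jac a c) := by
  have h : Jac a c = fun p =>
      _root_.pdx a p * _root_.pdy c p - _root_.pdy a p * _root_.pdx c p := rfl
  rw [h]
  exact (ha.pdx.mul hc.pdy).sub (ha.pdy.mul hc.pdx)

theorem Nice.integrableOn {g : ℝ × ℝ → ℝ} (hg : Nice g) : IntegrableOn g UnitSq :=
  hg.1.continuous.continuousOn.integrableOn_compact (isCompact_Icc.prod isCompact_Icc)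

/-- ∫ J(a,c) = 0. -/
theorem integral_jac_zero {a c : ℝ × ℝ → ℝ} (ha : Nice a) (hc : Nice c) :
    ∫ p in UnitSq, Jac a c p = 0 := by
  have e1 : pdx (fun p => a p * pdy c p) = fun p => pdx a p * pdy c p + a p * pdx (pdy c) p :=
    DD_mul ha.1 hc.pdy.1 ((1:ℝ), (0:ℝ))
  have e2 : pdy (fun p => a p * pdx c p) = fun p => pdy a p * pdx c p + a p * pdy (pdx c) p :=
    DD_mul ha.1 hc.pdx.1 ((0:ℝ), (1:ℝ))
  have hcomm : pdx (pdy c) = pdy (pdx c) := DD_comm hc.1 ((1:ℝ),(0:ℝ)) ((0:ℝ),(1:ℝ))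
  have hid : Jac a c = fun p =>
      pdx (fun p => a p * pdy c p) p - pdy (fun p => a p * pdx c p) p := by
    funext p
    simp only [Jac, e1, e2, hcomm]
    ring
  rw [hid]
  rw [integral_sub ((ha.mul hc.pdy).pdx).integrableOn ((ha.mul hc.pdx).pdy).integrableOn]
  rw [integral_pdx_zero (ha.mul hc.pdy).1 (ha.mul hc.pdy).2,
    integral_pdy_zero (ha.mul hc.pdx).1 (ha.mul hc.pdx).2]
  ring

/-- J(a·a, c) = 2 a J(a,c), hence ∫ a J(a,c) = 0. -/
theorem integral_self_jac_zero {a c : ℝ × ℝ → ℝ} (ha : Nice a) (hc : Nice c) :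
    ∫ p in UnitSq, a p * Jac a c p = 0 := by
  have e : pdx (fun p => a p * a p) = fun p => pdx a p * a p + a p * pdx a p :=
    DD_mul ha.1 ha.1 ((1:ℝ), (0:ℝ))
  have e' : pdy (fun p => a p * a p) = fun p => pdy a p * a p + a p * pdy a p :=
    DD_mul ha.1 ha.1 ((0:ℝ), (1:ℝ))
  have hid : ∀ p, a p * Jac a c p = (1/2) * Jac (fun p => a p * a p) c p := by
    intro p
    simp only [Jac, e, e']
    ring
  calc ∫ p in UnitSq, a p * Jac a c p
      = ∫ p in UnitSq, (1/2) * Jac (fun p => a p * a p) c p := by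
        exact setIntegral_congr_fun unitSq_meas (fun p _ => hid p)
    _ = (1/2) * ∫ p in UnitSq, Jac (fun p => a p * a p) c p := by
        rw [MeasureTheory.integral_const_mul]
    _ = 0 := by rw [integral_jac_zero (ha.mul ha) hc]; ring

/-- ∫ (c J(a,b) + b J(a,c)) = 0. -/
theorem integral_jac_swap {a b c : ℝ × ℝ → ℝ} (ha : Nice a) (hb : Nice b) (hc : Nice c) :
    (∫ p in UnitSq, c p * Jac a b p) + (∫ p in UnitSq, b p * Jac a c p) = 0 := by
  have e : pdx (fun p => b p * c p) = fun p => pdx b p * c p + b p * pdx c p :=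
    DD_mul hb.1 hc.1 ((1:ℝ), (0:ℝ))
  have e' : pdy (fun p => b p * c p) = fun p => pdy b p * c p + b p * pdy c p :=
    DD_mul hb.1 hc.1 ((0:ℝ), (1:ℝ))
  have hid : ∀ p, Jac a (fun p => b p * c p) p = c p * Jac a b p + b p * Jac a c p := by
    intro p
    simp only [Jac, e, e']
    ring
  have h0 : ∫ p in UnitSq, Jac a (fun p => b p * c p) p = 0 :=
    integral_jac_zero ha (hb.mul hc)
  rw [← h0]
  rw [show (∫ p in UnitSq, Jac a (fun p => b p * c p) p)
      = ∫ p in UnitSq, (c p * Jac a b p + b p * Jac a c p) from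
    setIntegral_congr_fun unitSq_meas (fun p _ => hid p)]
  rw [integral_add (hc.mul (ha.jac hb)).integrableOn (hb.mul (ha.jac hc)).integrableOn]

theorem jac_antisymm (a c : ℝ × ℝ → ℝ) : ∀ p, Jac a c p = -Jac c a p := by
  intro p; simp only [Jac]; ring

/-- Integration by parts: ∫ u ∂v = -∫ ∂u v. -/
theorem integral_pdx_parts {u v : ℝ × ℝ → ℝ} (hu : Nice u) (hv : Nice v) :
    ∫ p in UnitSq, u p * pdx v p = -∫ p in UnitSq, pdx u p * v p := by
  have e : pdx (fun p => u p * v p) = fun p => pdx u p * v p + u p * pdx v p :=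
    DD_mul hu.1 hv.1 ((1:ℝ), (0:ℝ))
  have h0 : ∫ p in UnitSq, pdx (fun p => u p * v p) p = 0 :=
    integral_pdx_zero (hu.mul hv).1 (hu.mul hv).2
  rw [show (∫ p in UnitSq, pdx (fun p => u p * v p) p)
      = ∫ p in UnitSq, (pdx u p * v p + u p * pdx v p) from by rw [e]] at h0
  rw [integral_add (hu.pdx.mul hv).integrableOn (hu.mul hv.pdx).integrableOn] at h0
  linarith

theorem integral_pdy_parts {u v : ℝ × ℝ → ℝ} (hu : Nice u) (hv : Nice v) :
    ∫ p in UnitSq, u p * pdy v p = -∫ p in UnitSq, pdy u p * v p := by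
  have e : pdy (fun p => u p * v p) = fun p => pdy u p * v p + u p * pdy v p :=
    DD_mul hu.1 hv.1 ((0:ℝ), (1:ℝ))
  have h0 : ∫ p in UnitSq, pdy (fun p => u p * v p) p = 0 :=
    integral_pdy_zero (hu.mul hv).1 (hu.mul hv).2
  rw [show (∫ p in UnitSq, pdy (fun p => u p * v p) p)
      = ∫ p in UnitSq, (pdy u p * v p + u p * pdy v p) from by rw [e]] at h0
  rw [integral_add (hu.pdy.mul hv).integrableOn (hu.mul hv.pdy).integrableOn] at h0
  linarith

/-- Self-adjointness of the Laplacian on the torus. -/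
theorem integral_lap_symm {u v : ℝ × ℝ → ℝ} (hu : Nice u) (hv : Nice v) :
    ∫ p in UnitSq, u p * lap v p = ∫ p in UnitSq, lap u p * v p := by
  have hx : ∫ p in UnitSq, u p * pdx (pdx v) p = ∫ p in UnitSq, pdx (pdx u) p * v p := by
    rw [integral_pdx_parts hu hv.pdx, integral_pdx_parts hu.pdx hv]
    ring
  have hy : ∫ p in UnitSq, u p * pdy (pdy v) p = ∫ p in UnitSq, pdy (pdy u) p * v p := by
    rw [integral_pdy_parts hu hv.pdy, integral_pdy_parts hu.pdy hv]
    ring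
  have el : ∀ w : ℝ × ℝ → ℝ, lap w = fun p => pdx (pdx w) p + pdy (pdy w) p := fun _ => rfl
  rw [el u, el v]
  have lhs : ∫ p in UnitSq, u p * (pdx (pdx v) p + pdy (pdy v) p)
      = (∫ p in UnitSq, u p * pdx (pdx v) p) + ∫ p in UnitSq, u p * pdy (pdy v) p := by
    rw [← integral_add (hu.mul hv.pdx.pdx).integrableOn (hu.mul hv.pdy.pdy).integrableOn]
    exact setIntegral_congr_fun unitSq_meas (fun p _ => by ring)
  have rhs : ∫ p in UnitSq, (pdx (pdx u) p + pdy (pdy u) p) * v p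
      = (∫ p in UnitSq, pdx (pdx u) p * v p) + ∫ p in UnitSq, pdy (pdy u) p * v p := by
    rw [← integral_add (hu.pdx.pdx.mul hv).integrableOn (hu.pdy.pdy.mul hv).integrableOn]
    exact setIntegral_congr_fun unitSq_meas (fun p _ => by ring)
  rw [lhs, rhs, hx, hy]

theorem integral_laplap_symm {u v : ℝ × ℝ → ℝ} (hu : Nice u) (hv : Nice v) :
    ∫ p in UnitSq, u p * lap (lap v) p = ∫ p in UnitSq, lap (lap u) p * v p := by
  rw [integral_lap_symm hu hv.lap]
  have h1 : ∫ p in UnitSq, lap u p * lap v p = ∫ p in UnitSq, lap (lap u) p * v p := by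
    have := integral_lap_symm hu.lap hv
    rw [← this]
  rw [← h1]


/-- constant multiple rule. -/
theorem DD_const_mul {E : Type*} [NormedAddCommGroup E] [NormedSpace ℝ E]
    {g : E → ℝ} (hg : ContDiff ℝ (⊤ : ℕ∞) g) (r : ℝ) (v : E) :
    DD v (fun z => r * g z) = fun z => r * DD v g z := by
  funext z
  show fderiv ℝ (fun z => r * g z) z v = r * fderiv ℝ g z v
  rw [fderiv_const_mul (hg.differentiable (by simp) z) r]
  simp

/-- Time derivative of purely spatial function is 0. -/
theorem DD_et_snd {f : ℝ × ℝ → ℝ} (hf : ContDiff ℝ (⊤ : ℕ∞) f) :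
    DD et (fun z : Wsp => f z.2) = fun _ => 0 := by
  funext z
  have h1 : HasFDerivAt (fun z : Wsp => f z.2)
      ((fderiv ℝ f z.2).comp (ContinuousLinearMap.snd ℝ ℝ (ℝ × ℝ))) z :=
    (hf.differentiable (by simp) z.2).hasFDerivAt.comp z (hasFDerivAt_snd)
  show fderiv ℝ (fun z : Wsp => f z.2) z et = 0
  rw [h1.fderiv]
  simp [et]
  exact (fderiv ℝ f z.2).map_zero

noncomputable def Lop (F : Wsp → ℝ) : Wsp → ℝ :=
  fun z => DD ex (DD ex F) z + DD ey (DD ey F) z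

theorem Lop_contDiff {F : Wsp → ℝ} (hF : ContDiff ℝ (⊤ : ℕ∞) F) : ContDiff ℝ (⊤ : ℕ∞) (Lop F) :=
  (DD_contDiff (DD_contDiff hF ex) ex).add (DD_contDiff (DD_contDiff hF ey) ey)

theorem DD_Lop_comm {F : Wsp → ℝ} (hF : ContDiff ℝ (⊤ : ℕ∞) F) (v : Wsp) :
    DD v (Lop F) = Lop (DD v F) := by
  have h1 : DD v (Lop F)
      = fun z => DD v (DD ex (DD ex F)) z + DD v (DD ey (DD ey F)) z :=
    DD_add (DD_contDiff (DD_contDiff hF ex) ex) (DD_contDiff (DD_contDiff hF ey) ey) v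
  rw [h1, DD_comm (DD_contDiff hF ex) v ex, DD_comm (DD_contDiff hF ey) v ey,
    DD_comm hF v ex, DD_comm hF v ey]
  rfl

theorem perS_shift {F : Wsp → ℝ} (hF : PerS F) :
    (∀ z : Wsp, F (z + ((0:ℝ), ((1:ℝ), (0:ℝ)))) = F z) ∧
    (∀ z : Wsp, F (z + ((0:ℝ), ((0:ℝ), (1:ℝ)))) = F z) := by
  constructor <;> intro z
  · have h : z + ((0:ℝ), ((1:ℝ), (0:ℝ))) = (z.1, (z.2.1 + 1, z.2.2)) := by
      ext <;> simp
    rw [h]; exact (hF z.1 z.2).1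
  · have h : z + ((0:ℝ), ((0:ℝ), (1:ℝ))) = (z.1, (z.2.1, z.2.2 + 1)) := by
      ext <;> simp
    rw [h]; exact (hF z.1 z.2).2

theorem perS_of {F : Wsp → ℝ}
    (h1 : ∀ z : Wsp, F (z + ((0:ℝ), ((1:ℝ), (0:ℝ)))) = F z)
    (h2 : ∀ z : Wsp, F (z + ((0:ℝ), ((0:ℝ), (1:ℝ)))) = F z) : PerS F := by
  intro t p
  constructor
  · have h : (t, p) + ((0:ℝ), ((1:ℝ), (0:ℝ))) = (t, (p.1 + 1, p.2)) := by ext <;> simp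
    rw [← h]; exact h1 (t, p)
  · have h : (t, p) + ((0:ℝ), ((0:ℝ), (1:ℝ))) = (t, (p.1, p.2 + 1)) := by ext <;> simp
    rw [← h]; exact h2 (t, p)

theorem perS_DD {F : Wsp → ℝ} (hF : ContDiff ℝ (⊤ : ℕ∞) F) (hper : PerS F) (v : Wsp) :
    PerS (DD v F) :=
  perS_of (DD_per hF (perS_shift hper).1 v) (DD_per hF (perS_shift hper).2 v)

theorem slice_lap {F : Wsp → ℝ} (hF : ContDiff ℝ (⊤ : ℕ∞) F) (t : ℝ) :
    lap (fun q => F (t, q)) = fun p => Lop F (t, p) := by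
  funext p
  show pdx (pdx (fun q => F (t, q))) p + pdy (pdy (fun q => F (t, q))) p = _
  rw [slice_pdx hF t, slice_pdy hF t,
    slice_pdx (DD_contDiff hF ex) t, slice_pdy (DD_contDiff hF ey) t]
  rfl


/-- Mixed second-order symmetry terms and the key global integral identity. -/
theorem integral_comb {u v : ℝ × ℝ → ℝ} (α : ℝ) (hu : Nice u) (hv : Nice v) :
    ∫ p in UnitSq, (lap u p - u p - α * (lap (lap u) p - lap u p)) * v p
    = (∫ p in UnitSq, lap u p * v p) - (∫ p in UnitSq, u p * v p)
      - α * ((∫ p in UnitSq, lap (lap u) p * v p) - (∫ p in UnitSq, lap u p * v p)) := by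
  have h1 : ∀ p, (lap u p - u p - α * (lap (lap u) p - lap u p)) * v p
      = lap u p * v p - u p * v p - α * (lap (lap u) p * v p - lap u p * v p) := by
    intro p; ring
  rw [setIntegral_congr_fun unitSq_meas (fun p _ => h1 p)]
  have i1 : IntegrableOn (fun p => lap u p * v p) UnitSq := (hu.lap.mul hv).integrableOn
  have i2 : IntegrableOn (fun p => u p * v p) UnitSq := (hu.mul hv).integrableOn
  have i3 : IntegrableOn (fun p => lap (lap u) p * v p) UnitSq :=
    ((hu.lap.lap).mul hv).integrableOn
  have i12 : IntegrableOn (fun p => lap u p * v p - u p * v p) UnitSq := i1.sub i2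
  have i31 : IntegrableOn (fun p => α * (lap (lap u) p * v p - lap u p * v p)) UnitSq :=
    (i3.sub i1).const_mul α
  rw [integral_sub i12 i31, integral_sub i1 i2,
    MeasureTheory.integral_const_mul, integral_sub i3 i1]

theorem key_pair {u v : ℝ × ℝ → ℝ} (α : ℝ) (hu : Nice u) (hv : Nice v) :
    ∫ p in UnitSq, (lap u p - u p - α * (lap (lap u) p - lap u p)) * v p
    = ∫ p in UnitSq, (lap v p - v p - α * (lap (lap v) p - lap v p)) * u p := by
  have comm : ∀ (x y : ℝ × ℝ → ℝ), (∫ p in UnitSq, x p * y p) = ∫ p in UnitSq, y p * x p :=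
    fun x y => setIntegral_congr_fun unitSq_meas (fun p _ => mul_comm _ _)
  have c1 : (∫ p in UnitSq, lap u p * v p) = ∫ p in UnitSq, lap v p * u p := by
    rw [comm (lap u) v, integral_lap_symm hv hu]
  have c3 : (∫ p in UnitSq, lap (lap u) p * v p) = ∫ p in UnitSq, lap (lap v) p * u p := by
    rw [comm (lap (lap u)) v, integral_laplap_symm hv hu]
  rw [integral_comb α hu hv, integral_comb α hv hu, c1, c3, comm u v]

/-- The main vanishing integral. -/
theorem total_zero {A A' Om Om' Bb Bb' f h : ℝ × ℝ → ℝ} (α : ℝ)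
    (nA : Nice A) (nA' : Nice A') (nOm : Nice Om) (nOm' : Nice Om')
    (nBb : Nice Bb) (nBb' : Nice Bb') (nf : Nice f) (nh : Nice h)
    (hOm : ∀ p, Om p - f p = lap A p - A p - α * (lap (lap A) p - lap A p))
    (hOm' : ∀ p, Om' p = lap A' p - A' p - α * (lap (lap A') p - lap A' p))
    (hOm'2 : ∀ p, Om' p = -(Jac A (fun q => Om q - Bb q) p) - (1/2) * Jac h Bb p)
    (hBb' : ∀ p, Bb' p = -(Jac A Bb p)) :
    ∫ p in UnitSq, (Om' p * A p + (Om p - f p) * A' p + h p * Bb' p) = 0 := by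
  have i1 : IntegrableOn (fun p => Om' p * A p) UnitSq := (nOm'.mul nA).integrableOn
  have i2 : IntegrableOn (fun p => (Om p - f p) * A' p) UnitSq :=
    ((nOm.sub nf).mul nA').integrableOn
  have i3 : IntegrableOn (fun p => h p * Bb' p) UnitSq := (nh.mul nBb').integrableOn
  have i12 : IntegrableOn (fun p => Om' p * A p + (Om p - f p) * A' p) UnitSq := i1.add i2
  rw [integral_add i12 i3, integral_add i1 i2]
  set S : ℝ := ∫ p in UnitSq, A p * Jac h Bb p with hS
  -- T1 computation
  have hT1 : (∫ p in UnitSq, Om' p * A p) = -(1/2) * S := by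
    have e : ∀ p, Om' p * A p
        = -(A p * Jac A (fun q => Om q - Bb q) p) + (-(1/2)) * (A p * Jac h Bb p) := by
      intro p; rw [hOm'2 p]; ring
    rw [setIntegral_congr_fun unitSq_meas (fun p _ => e p)]
    have j1 : IntegrableOn (fun p => -(A p * Jac A (fun q => Om q - Bb q) p)) UnitSq :=
      (nA.mul (nA.jac (nOm.sub nBb))).integrableOn.neg
    have j2 : IntegrableOn (fun p => (-(1/2) : ℝ) * (A p * Jac h Bb p)) UnitSq :=
      (nA.mul (nh.jac nBb)).integrableOn.const_mul _
    rw [integral_add j1 j2]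
    rw [integral_neg, MeasureTheory.integral_const_mul]
    rw [integral_self_jac_zero nA (nOm.sub nBb)]
    simp [hS]
  -- T2 = T1
  have hT2 : (∫ p in UnitSq, (Om p - f p) * A' p) = ∫ p in UnitSq, Om' p * A p := by
    rw [setIntegral_congr_fun unitSq_meas (fun p _ => by rw [hOm p])]
    rw [key_pair α nA nA']
    exact (setIntegral_congr_fun unitSq_meas (fun p _ => by rw [hOm' p])).symm
  -- T3 computation
  have hT3 : (∫ p in UnitSq, h p * Bb' p) = S := by
    have e : ∀ p, h p * Bb' p = -(h p * Jac A Bb p) := by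
      intro p; rw [hBb' p]; ring
    rw [setIntegral_congr_fun unitSq_meas (fun p _ => e p), integral_neg]
    have sw1 := integral_jac_swap nA nBb nh
    have e2 : ∀ p, Bb p * Jac A h p = -(Bb p * Jac h A p) := by
      intro p; rw [jac_antisymm A h p]; ring
    have sw2 := integral_jac_swap nh nA nBb
    have r1 : (∫ p in UnitSq, Bb p * Jac A h p) = -∫ p in UnitSq, Bb p * Jac h A p := by
      rw [setIntegral_congr_fun unitSq_meas (fun p _ => e2 p), integral_neg]
    linarith [sw1, sw2, r1]
  rw [hT1, hT2, hT1, hT3]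
  ring

/-- Conservation of the α-TQG energy
E^α(t) = −(1/2)∫ [(ω − f)ψ + h b] dx : dE^α/dt = 0. -/
theorem stmt7 (α : ℝ) (hα : 0 ≤ α)
    (b ω ψ : ℝ × (ℝ × ℝ) → ℝ) (f h : ℝ × ℝ → ℝ)
    (hb : ContDiff ℝ (⊤ : ℕ∞) b) (hω : ContDiff ℝ (⊤ : ℕ∞) ω) (hψ : ContDiff ℝ (⊤ : ℕ∞) ψ)
    (hf : ContDiff ℝ (⊤ : ℕ∞) f) (hh : ContDiff ℝ (⊤ : ℕ∞) h)
    (hbper : PerS b) (hωper : PerS ω) (hψper : PerS ψ) (hfper : Per2 f) (hhper : Per2 h)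
    (heqb : ∀ (t : ℝ) (p : ℝ × ℝ),
      deriv (fun s => b (s, p)) t + Jac (fun q => ψ (t, q)) (fun q => b (t, q)) p = 0)
    (heqω : ∀ (t : ℝ) (p : ℝ × ℝ),
      deriv (fun s => ω (s, p)) t
        + Jac (fun q => ψ (t, q)) (fun q => ω (t, q) - b (t, q)) p
        = -(1/2) * Jac h (fun q => b (t, q)) p)
    (heqψ : ∀ (t : ℝ) (p : ℝ × ℝ),
      ω (t, p) = lap (fun q => ψ (t, q)) p - ψ (t, p)
        - α * (lap (lap (fun q => ψ (t, q))) p - lap (fun q => ψ (t, q)) p) + f p) :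
    ∀ t : ℝ, HasDerivAt
      (fun s => -(1/2) * ∫ p in UnitSq, ((ω (s, p) - f p) * ψ (s, p) + h p * b (s, p)))
      0 t := by
  intro t
  -- the space-time integrand
  set G : Wsp → ℝ := fun z => (ω z - f z.2) * ψ z + h z.2 * b z with hGdef
  have hGsm : ContDiff ℝ (⊤ : ℕ∞) G :=
    ((hω.sub (hf.comp contDiff_snd)).mul hψ).add ((hh.comp contDiff_snd).mul hb)
  -- Step 1: differentiate under the integral sign
  have key : HasDerivAt (fun s => ∫ p in UnitSq, G (s, p))
      (∫ p in UnitSq, DD et G (t, p)) t := by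
    have hG'C : Continuous (DD et G) := (DD_contDiff hGsm et).continuous
    obtain ⟨C, hC⟩ : ∃ C, ∀ z ∈ Set.Icc (t-1) (t+1) ×ˢ UnitSq, ‖DD et G z‖ ≤ C :=
      (isCompact_Icc.prod (isCompact_Icc.prod isCompact_Icc)).exists_bound_of_continuousOn
        hG'C.continuousOn
    have sliceC : ∀ s : ℝ, Continuous fun p => G (s, p) := fun s =>
      hGsm.continuous.comp (continuous_const.prodMk continuous_id)
    have sliceC' : ∀ s : ℝ, Continuous fun p => DD et G (s, p) := fun s =>
      hG'C.comp (continuous_const.prodMk continuous_id)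
    have main := hasDerivAt_integral_of_dominated_loc_of_deriv_le
      (μ := volume.restrict UnitSq) (F := fun s p => G (s, p))
      (F' := fun s p => DD et G (s, p)) (x₀ := t) (bound := fun _ => C)
      (Metric.ball_mem_nhds t zero_lt_one)
      (Filter.Eventually.of_forall fun s => (sliceC s).aestronglyMeasurable)
      ((sliceC t).continuousOn.integrableOn_compact (isCompact_Icc.prod isCompact_Icc))
      ((sliceC' t).aestronglyMeasurable)
      ?_ ?_ ?_
    · exact main.2
    · filter_upwards [ae_restrict_mem unitSq_meas] with p hp s hs
      have hs' : s ∈ Set.Icc (t-1) (t+1) := by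
        rw [Metric.mem_ball, Real.dist_eq] at hs
        have := abs_lt.1 hs
        constructor <;> linarith [this.1, this.2]
      exact hC (s, p) ⟨hs', hp⟩
    · exact integrableOn_const ((isCompact_Icc.prod isCompact_Icc).measure_lt_top).ne
    · exact Filter.Eventually.of_forall fun p s _ => hasDerivAt_time hGsm s p
  -- Step 2: full-space elliptic identity for ω
  have Hfull : ω = fun z : Wsp => Lop ψ z - ψ z - α * (Lop (Lop ψ) z - Lop ψ z) + f z.2 := by
    funext z
    obtain ⟨s, p⟩ := z
    have h0 := heqψ s p
    rw [slice_lap hψ s] at h0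
    rw [show lap (fun p => Lop ψ (s, p)) = fun p => Lop (Lop ψ) (s, p) from
      slice_lap (Lop_contDiff hψ) s] at h0
    exact h0
  have s1 : ContDiff ℝ (⊤ : ℕ∞) (Lop ψ) := Lop_contDiff hψ
  have s2 : ContDiff ℝ (⊤ : ℕ∞) (Lop (Lop ψ)) := Lop_contDiff s1
  have sA : ContDiff ℝ (⊤ : ℕ∞) (fun z => Lop ψ z - ψ z) := s1.sub hψ
  have sC : ContDiff ℝ (⊤ : ℕ∞) (fun z => α * (Lop (Lop ψ) z - Lop ψ z)) :=
    contDiff_const.mul (s2.sub s1)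
  -- Step 3: apply ∂ₜ, commuting derivatives
  have Hd : DD et ω = fun z => Lop (DD et ψ) z - DD et ψ z
      - α * (Lop (Lop (DD et ψ)) z - Lop (DD et ψ) z) := by
    have e1 := DD_add (a := fun z => Lop ψ z - ψ z - α * (Lop (Lop ψ) z - Lop ψ z))
      (c := fun z : Wsp => f z.2) (sA.sub sC) (hf.comp contDiff_snd) et
    have e2 := DD_sub (a := fun z => Lop ψ z - ψ z)
      (c := fun z => α * (Lop (Lop ψ) z - Lop ψ z)) sA sC et
    have e3 := DD_sub (a := Lop ψ) (c := ψ) s1 hψ et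
    have e4 := DD_const_mul (g := fun z => Lop (Lop ψ) z - Lop ψ z) (s2.sub s1) α et
    have e5 := DD_sub (a := Lop (Lop ψ)) (c := Lop ψ) s2 s1 et
    have e6 := DD_Lop_comm hψ et
    have e7 : DD et (Lop (Lop ψ)) = Lop (Lop (DD et ψ)) := by
      rw [DD_Lop_comm s1 et, e6]
    have e8 := DD_et_snd hf
    conv_lhs => rw [Hfull]
    funext z
    simp only [e1, e2, e3, e4, e5, e6, e7, e8]
    ring
  -- slice fields at time t
  have nψt : Nice (fun q => ψ (t, q)) := ⟨slice_contDiff hψ t, fun p => hψper t p⟩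
  have nωt : Nice (fun q => ω (t, q)) := ⟨slice_contDiff hω t, fun p => hωper t p⟩
  have nbt : Nice (fun q => b (t, q)) := ⟨slice_contDiff hb t, fun p => hbper t p⟩
  have nψ't : Nice (fun q => DD et ψ (t, q)) :=
    ⟨slice_contDiff (DD_contDiff hψ et) t, fun p => perS_DD hψ hψper et t p⟩
  have nω't : Nice (fun q => DD et ω (t, q)) :=
    ⟨slice_contDiff (DD_contDiff hω et) t, fun p => perS_DD hω hωper et t p⟩
  have nb't : Nice (fun q => DD et b (t, q)) :=
    ⟨slice_contDiff (DD_contDiff hb et) t, fun p => perS_DD hb hbper et t p⟩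
  have nf2 : Nice f := ⟨hf, hfper⟩
  have nh2 : Nice h := ⟨hh, hhper⟩
  -- pointwise identities at time t
  have hOm : ∀ p, ω (t, p) - f p = lap (fun q => ψ (t, q)) p - ψ (t, p)
      - α * (lap (lap (fun q => ψ (t, q))) p - lap (fun q => ψ (t, q)) p) := by
    intro p
    have := heqψ t p
    linarith
  have hOm' : ∀ p, DD et ω (t, p) = lap (fun q => DD et ψ (t, q)) p - DD et ψ (t, p)
      - α * (lap (lap (fun q => DD et ψ (t, q))) p - lap (fun q => DD et ψ (t, q)) p) := by
    intro p
    have hz := congrFun Hd (t, p)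
    simp only [slice_lap (DD_contDiff hψ et) t,
      slice_lap (Lop_contDiff (DD_contDiff hψ et)) t]
    exact hz
  have hOm'2 : ∀ p, DD et ω (t, p)
      = -(Jac (fun q => ψ (t, q)) (fun q => ω (t, q) - b (t, q)) p)
        - (1/2) * Jac h (fun q => b (t, q)) p := by
    intro p
    have hd := (hasDerivAt_time hω t p).deriv
    have := heqω t p
    rw [hd] at this
    linarith
  have hBb' : ∀ p, DD et b (t, p) = -(Jac (fun q => ψ (t, q)) (fun q => b (t, q)) p) := by
    intro p
    have hd := (hasDerivAt_time hb t p).deriv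
    have := heqb t p
    rw [hd] at this
    linarith
  -- Step 4: the integral of the time derivative vanishes
  have hzero : (∫ p in UnitSq, DD et G (t, p)) = 0 := by
    have hpt : ∀ p, DD et G (t, p) = DD et ω (t, p) * ψ (t, p)
        + (ω (t, p) - f p) * DD et ψ (t, p) + h p * DD et b (t, p) := by
      intro p
      have e0 := DD_add (a := fun z : Wsp => (ω z - f z.2) * ψ z)
        (c := fun z : Wsp => h z.2 * b z)
        ((hω.sub (hf.comp contDiff_snd)).mul hψ) ((hh.comp contDiff_snd).mul hb) et
      have eP := DD_mul (a := fun z : Wsp => ω z - f z.2) (c := ψ)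
        (hω.sub (hf.comp contDiff_snd)) hψ et
      have eS := DD_sub (a := ω) (c := fun z : Wsp => f z.2) hω (hf.comp contDiff_snd) et
      have eQ := DD_mul (a := fun z : Wsp => h z.2) (c := b)
        (hh.comp contDiff_snd) hb et
      have ef := DD_et_snd hf
      have eh := DD_et_snd hh
      have : DD et G (t, p) = _ := congrFun (congrArg (DD et) hGdef) (t, p)
      rw [this]
      simp only [e0, eP, eS, eQ, ef, eh]
      ring
    have hcong : (∫ p in UnitSq, DD et G (t, p))
        = ∫ p in UnitSq, ((fun q => DD et ω (t, q)) p * (fun q => ψ (t, q)) p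
          + ((fun q => ω (t, q)) p - f p) * (fun q => DD et ψ (t, q)) p
          + h p * (fun q => DD et b (t, q)) p) :=
      setIntegral_congr_fun unitSq_meas (fun p _ => hpt p)
    rw [hcong]
    exact total_zero α nψt nψ't nωt nω't nbt nb't nf2 nh2 hOm hOm' hOm'2 hBb'
  rw [hzero] at key
  have final := key.const_mul (-(1/2) : ℝ)
  simpa using final
end

section
/- Let U, β, B, H ∈ ℝ and α ≥ 0. Let k = (k₁, k₂) ∈ ℝ² with k₁ ≠ 0, let ν ∈ ℂ, and let ŵ, b̂, ψ̂ ∈ ℂ with ψ̂ ≠ 0. Suppose the plane-wave amplitudes satisfy the linear system obtained from the linearised α-TQG equations: (ν − k₁U)ŵ − k₁(U + B − β)ψ̂ = −k₁(U − H/2)b̂, (ν − k₁U)b̂ = −k₁B ψ̂, and −ŵ = (|k|² + 1)(α|k|² + 1)ψ̂, where |k|² = k₁² + k₂². Then the Doppler-shifted phase speed C := (ν − k₁U)/k₁ satisfies the dispersion relation C²(|k|² + 1)(α|k|² + 1) + C·X + Y = 0, where X := U + B − β and Y := (U − H/2)B. -/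
/-! Multiplying the vorticity equation by `c = ν - k₁U` and substituting `c b̂` from the buoyancy
equation and `ŵ` from the inversion relation leaves a quadratic in `c` times `ψ̂`. Cancelling
`ψ̂ ≠ 0` and dividing the homogeneous quadratic by `k₁²` gives the relation for `C = c / k₁`. -/

section Dispersion

variable {K : Type*} [Field K]

theorem quadratic_eq_zero_of_plane_wave_system {c k M X Y B w b ψ : K} (hψ : ψ ≠ 0)
    (h1 : c * w - k * X * ψ = -(k * Y) * b) (h2 : c * b = -(k * B) * ψ) (h3 : -w = M * ψ) :
    c ^ 2 * M + c * k * X + k ^ 2 * (Y * B) = 0 := by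
  have h : (c ^ 2 * M + c * k * X + k ^ 2 * (Y * B)) * ψ = 0 := by
    linear_combination (-c) * h1 + (k * Y) * h2 - c ^ 2 * h3
  exact (mul_eq_zero.mp h).resolve_right hψ

theorem quadratic_div_sq_eq_zero {c k M X Z : K} (hk : k ≠ 0)
    (h : c ^ 2 * M + c * k * X + k ^ 2 * Z = 0) :
    (c / k) ^ 2 * M + c / k * X + Z = 0 := by
  field_simp
  linear_combination h

end Dispersion

theorem stmt9_general (U β B H α : ℝ)
    (k : ℝ × ℝ) (hk : k.1 ≠ 0)
    (ν wHat bHat psiHat : ℂ) (hψ : psiHat ≠ 0)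
    (h1 : (ν - (k.1 : ℂ) * (U : ℂ)) * wHat - (k.1 : ℂ) * ((U : ℂ) + (B : ℂ) - (β : ℂ)) * psiHat
          = -((k.1 : ℂ) * ((U : ℂ) - (H : ℂ) / 2)) * bHat)
    (h2 : (ν - (k.1 : ℂ) * (U : ℂ)) * bHat = -((k.1 : ℂ) * (B : ℂ)) * psiHat)
    (h3 : -wHat = (((k.1 : ℂ) ^ 2 + (k.2 : ℂ) ^ 2 + 1)
          * ((α : ℂ) * ((k.1 : ℂ) ^ 2 + (k.2 : ℂ) ^ 2) + 1)) * psiHat) :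
    ((ν - (k.1 : ℂ) * (U : ℂ)) / (k.1 : ℂ)) ^ 2
        * (((k.1 : ℂ) ^ 2 + (k.2 : ℂ) ^ 2 + 1)
          * ((α : ℂ) * ((k.1 : ℂ) ^ 2 + (k.2 : ℂ) ^ 2) + 1))
      + ((ν - (k.1 : ℂ) * (U : ℂ)) / (k.1 : ℂ)) * ((U : ℂ) + (B : ℂ) - (β : ℂ))
      + ((U : ℂ) - (H : ℂ) / 2) * (B : ℂ) = 0 :=
  quadratic_div_sq_eq_zero (by exact_mod_cast hk)
    (quadratic_eq_zero_of_plane_wave_system hψ h1 h2 h3)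

/-- The dispersion relation for linearised α-TQG thermal Rossby waves: if the plane-wave
amplitudes (ŵ, b̂, ψ̂), ψ̂ ≠ 0, satisfy the linearised algebraic system, then the
Doppler-shifted phase speed C = (ν − k₁U)/k₁ satisfies
C²(|k|²+1)(α|k|²+1) + CX + Y = 0 with X = U + B − β, Y = (U − H/2)B. -/
theorem stmt9 (U β B H α : ℝ) (hα : 0 ≤ α)
    (k : ℝ × ℝ) (hk : k.1 ≠ 0)
    (ν wHat bHat psiHat : ℂ) (hψ : psiHat ≠ 0)
    (h1 : (ν - (k.1 : ℂ) * (U : ℂ)) * wHat - (k.1 : ℂ) * ((U : ℂ) + (B : ℂ) - (β : ℂ)) * psiHat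
          = -((k.1 : ℂ) * ((U : ℂ) - (H : ℂ) / 2)) * bHat)
    (h2 : (ν - (k.1 : ℂ) * (U : ℂ)) * bHat = -((k.1 : ℂ) * (B : ℂ)) * psiHat)
    (h3 : -wHat = (((k.1 : ℂ) ^ 2 + (k.2 : ℂ) ^ 2 + 1)
          * ((α : ℂ) * ((k.1 : ℂ) ^ 2 + (k.2 : ℂ) ^ 2) + 1)) * psiHat) :
    ((ν - (k.1 : ℂ) * (U : ℂ)) / (k.1 : ℂ)) ^ 2
        * (((k.1 : ℂ) ^ 2 + (k.2 : ℂ) ^ 2 + 1)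
          * ((α : ℂ) * ((k.1 : ℂ) ^ 2 + (k.2 : ℂ) ^ 2) + 1))
      + ((ν - (k.1 : ℂ) * (U : ℂ)) / (k.1 : ℂ)) * ((U : ℂ) + (B : ℂ) - (β : ℂ))
      + ((U : ℂ) - (H : ℂ) / 2) * (B : ℂ) = 0 :=
  stmt9_general U β B H α k hk ν wHat bHat psiHat hψ h1 h2 h3
end

section
/- Let α > 0, X ∈ ℝ, Y > 0, and k ∈ ℝ² with k ≠ 0. Set A := (|k|² + 1)(α|k|² + 1) where |k|² = k₁² + k₂², and suppose 4YA > X². Then every complex root C of the quadratic A·C² + X·C + Y = 0 is non-real, its imaginary part satisfies |Im C| = √(4YA − X²)/(2A), and moreover |Im C| ≤ √(Y/α) / |k|². In particular, the growth rate of the linearised α-TQG thermal Rossby wave instability decays to zero at the rate |k|^{-2} as |k| → ∞. -/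
/-
Since the discriminant `X² − 4YA` is negative, the quadratic formula gives the roots
`(−X ± i √(4YA − X²)) / (2A)`. Dropping `−X²` bounds `|Im C|` by `√(Y/A)`, and
`A ≥ α |k|⁴` turns this into `√(Y/α) / |k|²`.
-/

open Complex in
theorem abs_im_eq_of_quadratic_root {a b c : ℝ} (ha : 0 < a) (hdisc : b ^ 2 < 4 * a * c)
    {z : ℂ} (hz : (a : ℂ) * z ^ 2 + b * z + c = 0) :
    |z.im| = √(4 * a * c - b ^ 2) / (2 * a) := by
  set d := 4 * a * c - b ^ 2
  have hdisc_eq : discrim (a : ℂ) b c = (I * √d) * (I * √d) := by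
    have hsq : ((√d : ℝ) : ℂ) * (√d : ℝ) = d := by
      rw [← ofReal_mul, Real.mul_self_sqrt (by linarith)]
    rw [discrim, mul_mul_mul_comm, I_mul_I, hsq]
    push_cast [d]
    ring
  rw [sq, quadratic_eq_zero_iff (by exact_mod_cast ha.ne') hdisc_eq] at hz
  have h2a : (2 * a : ℂ) = ((2 * a : ℝ) : ℂ) := by push_cast; ring
  rcases hz with rfl | rfl <;>
  · rw [h2a, div_ofReal_im]
    simp [abs_div, abs_of_pos ha, abs_of_nonneg (Real.sqrt_nonneg d)]

theorem sqrt_sub_sq_div_le_sqrt_div {a b c : ℝ} (ha : 0 < a) :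
    √(4 * a * c - b ^ 2) / (2 * a) ≤ √(c / a) :=
  calc √(4 * a * c - b ^ 2) / (2 * a) ≤ √(c / a * (2 * a) ^ 2) / (2 * a) := by
        gcongr
        field_simp
        nlinarith [sq_nonneg b]
    _ = √(c / a) := by
        rw [Real.sqrt_mul' _ (sq_nonneg _), Real.sqrt_sq (by positivity)]
        field_simp

theorem sqrt_div_le_sqrt_div_div_of_mul_sq_le {a c α s : ℝ} (hc : 0 ≤ c) (hα : 0 < α)
    (hs : 0 < s) (ha : α * s ^ 2 ≤ a) :
    √(c / a) ≤ √(c / α) / s :=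
  calc √(c / a) ≤ √(c / (α * s ^ 2)) :=
        Real.sqrt_le_sqrt (div_le_div_of_nonneg_left hc (by positivity) ha)
    _ = √(c / α) / s := by rw [← div_div, Real.sqrt_div' _ (sq_nonneg s), Real.sqrt_sq hs.le]

theorem sq_fst_add_sq_snd_pos {k : ℝ × ℝ} (hk : k ≠ 0) : 0 < k.1 ^ 2 + k.2 ^ 2 := by
  contrapose! hk
  have h1 : k.1 = 0 := pow_eq_zero_iff two_ne_zero |>.mp (by nlinarith [sq_nonneg k.2])
  have h2 : k.2 = 0 := pow_eq_zero_iff two_ne_zero |>.mp (by nlinarith [sq_nonneg k.1])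
  exact Prod.ext h1 h2

/-- Roots of the α-TQG dispersion quadratic A C² + X C + Y = 0 with
A = (|k|²+1)(α|k|²+1), Y > 0 and 4YA > X²: every complex root is non-real, its imaginary
part has modulus √(4YA − X²)/(2A), and this is at most √(Y/α)/|k|², so the instability
growth rate decays like |k|^{-2}. -/
theorem stmt10 (α : ℝ) (hα : 0 < α) (X Y : ℝ) (hY : 0 < Y)
    (k : ℝ × ℝ) (hk : k ≠ 0)
    (A : ℝ) (hA : A = (k.1 ^ 2 + k.2 ^ 2 + 1) * (α * (k.1 ^ 2 + k.2 ^ 2) + 1))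
    (hdisc : X ^ 2 < 4 * Y * A) :
    ∀ C : ℂ, (A : ℂ) * C ^ 2 + (X : ℂ) * C + (Y : ℂ) = 0 →
      C.im ≠ 0 ∧
      |C.im| = Real.sqrt (4 * Y * A - X ^ 2) / (2 * A) ∧
      |C.im| ≤ Real.sqrt (Y / α) / (k.1 ^ 2 + k.2 ^ 2) := by
  intro C hC
  have hs := sq_fst_add_sq_snd_pos hk
  have hApos : 0 < A := hA ▸ by positivity
  have hAs : α * (k.1 ^ 2 + k.2 ^ 2) ^ 2 ≤ A := by rw [hA]; nlinarith
  rw [mul_right_comm] at hdisc ⊢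
  have him := abs_im_eq_of_quadratic_root hApos hdisc hC
  refine ⟨fun h => ?_, him, ?_⟩
  · rw [h, abs_zero, eq_comm, div_eq_zero_iff, Real.sqrt_eq_zero'] at him
    rcases him with h | h <;> linarith
  · calc |C.im| ≤ √(Y / A) := him ▸ sqrt_sub_sq_div_le_sqrt_div hApos
      _ ≤ √(Y / α) / (k.1 ^ 2 + k.2 ^ 2) :=
        sqrt_div_le_sqrt_div_div_of_mul_sq_le hY.le hα hs hAs
end
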